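/- arXiv:1302.5321 — 2 statements merged into one kernel-verified Lean document; each statement's English description precedes it below -/
import Mathlib

section
/- Let a, b be real numbers with a > b > 0. Then the function x ↦ arsinh(x/b) − arsinh(x/a) is strictly monotone increasing on ℝ. (Consequently, for any fixed x₀, the function f′(x) = arsinh(x/b) − arsinh(x/a) + arsinh(x₀/a) − arsinh(x₀/b) vanishes exactly at x = x₀.) -/
open Real

theorem hasDerivAt_arsinh_div_const {c : ℝ} (hc : 0 < c) (x : ℝ) :
    HasDerivAt (fun x => arsinh (x / c)) (√(c ^ 2 + x ^ 2))⁻¹ x := by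
  have hsqrt : √(c ^ 2 + x ^ 2) = c * √(1 + (x / c) ^ 2) := by
    rw [show c ^ 2 + x ^ 2 = c ^ 2 * (1 + (x / c) ^ 2) by field_simp,
      sqrt_mul (sq_nonneg c), sqrt_sq hc.le]
  refine ((hasDerivAt_arsinh (x / c)).comp x ((hasDerivAt_id x).div_const c)).congr_deriv ?_
  rw [hsqrt]
  field_simp

theorem strictMono_arsinh_div_sub_arsinh_div {a b : ℝ} (hb : 0 < b) (hba : b < a) :
    StrictMono fun x => arsinh (x / b) - arsinh (x / a) := by
  refine strictMono_of_deriv_pos fun x => ?_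
  have hderiv : HasDerivAt (fun x => arsinh (x / b) - arsinh (x / a)) _ x :=
    (hasDerivAt_arsinh_div_const hb x).sub (hasDerivAt_arsinh_div_const (hb.trans hba) x)
  rw [hderiv.deriv, sub_pos]
  -- `(√(a² + x²))⁻¹ < (√(b² + x²))⁻¹` because `b² < a²`
  gcongr

/-- For `a > b > 0`, the function `x ↦ arsinh(x/b) − arsinh(x/a)` is strictly
monotone increasing on `ℝ`; consequently, for any fixed `x₀`, the function
`f′(x) = arsinh(x/b) − arsinh(x/a) + arsinh(x₀/a) − arsinh(x₀/b)` vanishes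
exactly at `x = x₀`. -/
theorem stmt_2 (a b : ℝ) (hab : a > b) (hb : b > 0) :
    StrictMono (fun x : ℝ => Real.arsinh (x / b) - Real.arsinh (x / a)) ∧
      ∀ x₀ x : ℝ,
        (Real.arsinh (x / b) - Real.arsinh (x / a)
          + Real.arsinh (x₀ / a) - Real.arsinh (x₀ / b) = 0 ↔ x = x₀) := by
  have hmono := strictMono_arsinh_div_sub_arsinh_div hb hab
  refine ⟨hmono, fun x₀ x => ?_⟩
  rw [show arsinh (x / b) - arsinh (x / a) + arsinh (x₀ / a) - arsinh (x₀ / b) =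
      (arsinh (x / b) - arsinh (x / a)) - (arsinh (x₀ / b) - arsinh (x₀ / a)) by ring,
    sub_eq_zero]
  exact hmono.injective.eq_iff
end

section
/- Let a, b, x₀ be real numbers with a > b > 0, let V be a real inner product space, let u, v ∈ V, and let x ∈ ℝ. Define f(x) = √(a² + x²) − √(b² + x²) − x·[arsinh(x/a) − arsinh(x/b) − arsinh(x₀/a) + arsinh(x₀/b)]. Then √(1 + ‖v‖²)·f(x) − (⟨u, v⟩ / √(1 + ‖u‖²))·(√(a² + x₀²) − √(b² + x₀²)) ≥ (1 / √(1 + ‖u‖²))·(√(a² + x₀²) − √(b² + x₀²)), with equality if and only if x = x₀ and u = v. (This is the pointwise integrand inequality proving Theorem 1: the left side is the integrand of A and the right side is the integrand of E(Σ, τ₀), with a = |H_{τ₀}|, b = |H|, u = ∇τ₀, v = ∇τ, x = Δτ/√(1+|∇τ|²), x₀ = Δτ₀/√(1+|∇τ₀|²).) -/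
open scoped RealInnerProductSpace

/-!
With `φ(y) = arsinh (y/a) - arsinh (y/b)` one has `f' = φ(x₀) - φ`, and `φ` is strictly
decreasing because `a > b`; hence `f` attains its strict global minimum
`c = √(a² + x₀²) - √(b² + x₀²) > 0` at `x₀`.
On the vector side, `(1 + ‖u‖²)(1 + ‖v‖²) - (1 + ⟪u, v⟫)² = ‖u - v‖² + (‖u‖²‖v‖² - ⟪u, v⟫²)`,
so `1 + ⟪u, v⟫ ≤ √(1 + ‖u‖²) √(1 + ‖v‖²)` with equality iff `u = v`.
Multiplying the claim by `√(1 + ‖u‖²)`, the difference of its two sides becomes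
`√(1 + ‖u‖²) √(1 + ‖v‖²) (f x - c) + c (√(1 + ‖u‖²) √(1 + ‖v‖²) - (1 + ⟪u, v⟫))`,
a sum of two nonnegative terms vanishing exactly when `x = x₀` and `u = v`.
-/

open Real Set

section Calculus

theorem hasDerivAt_sqrt_sq_add_sq {a : ℝ} (ha : a ≠ 0) (y : ℝ) :
    HasDerivAt (fun y ↦ √(a ^ 2 + y ^ 2)) (y / √(a ^ 2 + y ^ 2)) y := by
  have hpos : 0 < a ^ 2 + y ^ 2 := by positivity
  have hsq : HasDerivAt (fun y : ℝ ↦ a ^ 2 + y ^ 2) (2 * y) y := by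
    simpa using (hasDerivAt_pow 2 y).const_add (a ^ 2)
  refine ((hasDerivAt_sqrt hpos.ne').comp y hsq).congr_deriv ?_
  field_simp

theorem hasDerivAt_arsinh_div {a : ℝ} (ha : 0 < a) (y : ℝ) :
    HasDerivAt (fun y ↦ arsinh (y / a)) (1 / √(a ^ 2 + y ^ 2)) y := by
  refine ((hasDerivAt_arsinh (y / a)).comp y ((hasDerivAt_id y).div_const a)).congr_deriv ?_
  have hscale : √(a ^ 2 + y ^ 2) = a * √(1 + (y / a) ^ 2) := by
    rw [show a ^ 2 + y ^ 2 = a ^ 2 * (1 + (y / a) ^ 2) by field_simp,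
      sqrt_mul (by positivity), sqrt_sq ha.le]
  rw [hscale]
  field_simp

theorem strictAnti_arsinh_div_sub_arsinh_div {a b : ℝ} (hb : 0 < b) (hab : b < a) :
    StrictAnti fun y ↦ arsinh (y / a) - arsinh (y / b) := by
  refine strictAnti_of_hasDerivAt_neg
    (fun y ↦ (hasDerivAt_arsinh_div (hb.trans hab) y).sub (hasDerivAt_arsinh_div hb y))
    fun y ↦ ?_
  have hlt : √(b ^ 2 + y ^ 2) < √(a ^ 2 + y ^ 2) :=
    sqrt_lt_sqrt (by positivity) (by nlinarith)
  linarith [one_div_lt_one_div_of_lt (by positivity) hlt]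

theorem hasDerivAt_sqrt_sub_sqrt_sub_mul_arsinh {a b : ℝ} (ha : 0 < a) (hb : 0 < b) (k y : ℝ) :
    HasDerivAt
      (fun y ↦ √(a ^ 2 + y ^ 2) - √(b ^ 2 + y ^ 2) - y * (arsinh (y / a) - arsinh (y / b) - k))
      (k - (arsinh (y / a) - arsinh (y / b))) y := by
  have hφ := ((hasDerivAt_arsinh_div ha y).sub (hasDerivAt_arsinh_div hb y)).sub_const k
  refine (((hasDerivAt_sqrt_sq_add_sq ha.ne' y).sub (hasDerivAt_sqrt_sq_add_sq hb.ne' y)).sub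
    ((hasDerivAt_id y).mul hφ)).congr_deriv ?_
  simp only [id, Pi.sub_apply]
  field_simp
  ring

theorem lt_of_hasDerivAt_sub_of_strictAnti {F ψ : ℝ → ℝ} {x₀ y : ℝ}
    (hF : ∀ t, HasDerivAt F (ψ x₀ - ψ t) t) (hψ : StrictAnti ψ) (hy : y ≠ x₀) :
    F x₀ < F y := by
  have hcont : ContinuousOn F univ := fun t _ ↦ (hF t).continuousAt.continuousWithinAt
  rcases hy.lt_or_gt with hlt | hgt
  · have hanti : StrictAntiOn F (Iic x₀) :=
      strictAntiOn_of_hasDerivWithinAt_neg (convex_Iic x₀) (hcont.mono (subset_univ _))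
        (fun t _ ↦ (hF t).hasDerivWithinAt) fun t ht ↦ by
          rw [interior_Iic] at ht
          linarith [hψ ht]
    exact hanti hlt.le self_mem_Iic hlt
  · have hmono : StrictMonoOn F (Ici x₀) :=
      strictMonoOn_of_hasDerivWithinAt_pos (convex_Ici x₀) (hcont.mono (subset_univ _))
        (fun t _ ↦ (hF t).hasDerivWithinAt) fun t ht ↦ by
          rw [interior_Ici] at ht
          linarith [hψ ht]
    exact hmono self_mem_Ici hgt.le hgt

theorem sqrt_sub_sqrt_lt_of_ne {a b x₀ y : ℝ} (hb : 0 < b) (hab : b < a) (hy : y ≠ x₀) :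
    √(a ^ 2 + x₀ ^ 2) - √(b ^ 2 + x₀ ^ 2) < √(a ^ 2 + y ^ 2) - √(b ^ 2 + y ^ 2) -
      y * (arsinh (y / a) - arsinh (y / b) - (arsinh (x₀ / a) - arsinh (x₀ / b))) := by
  have hmin := lt_of_hasDerivAt_sub_of_strictAnti
    (hasDerivAt_sqrt_sub_sqrt_sub_mul_arsinh (hb.trans hab) hb (arsinh (x₀ / a) - arsinh (x₀ / b)))
    (strictAnti_arsinh_div_sub_arsinh_div hb hab) hy
  simpa only [sub_self, mul_zero, sub_zero] using hmin

end Calculus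

section Hyperboloid

variable {V : Type*} [NormedAddCommGroup V] [InnerProductSpace ℝ V]

theorem one_add_sq_mul_one_add_sq_eq (u v : V) :
    (1 + ‖u‖ ^ 2) * (1 + ‖v‖ ^ 2) =
      (1 + ⟪u, v⟫) ^ 2 + ‖u - v‖ ^ 2 + ((‖u‖ * ‖v‖) ^ 2 - ⟪u, v⟫ ^ 2) := by
  rw [norm_sub_sq_real]
  ring

theorem sq_inner_le_sq_norm_mul_norm (u v : V) : ⟪u, v⟫ ^ 2 ≤ (‖u‖ * ‖v‖) ^ 2 :=
  sq_le_sq.2 <| (abs_real_inner_le_norm u v).trans (le_abs_self _)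

theorem one_add_inner_le_sqrt_mul_sqrt (u v : V) :
    1 + ⟪u, v⟫ ≤ √(1 + ‖u‖ ^ 2) * √(1 + ‖v‖ ^ 2) := by
  rw [← sqrt_mul (by positivity), one_add_sq_mul_one_add_sq_eq]
  refine (le_abs_self _).trans (abs_le_sqrt ?_)
  linarith [sq_inner_le_sq_norm_mul_norm u v, sq_nonneg ‖u - v‖]

theorem one_add_inner_eq_sqrt_mul_sqrt_iff {u v : V} :
    1 + ⟪u, v⟫ = √(1 + ‖u‖ ^ 2) * √(1 + ‖v‖ ^ 2) ↔ u = v := by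
  constructor
  · intro h
    have hsq : (1 + ⟪u, v⟫) ^ 2 = (1 + ‖u‖ ^ 2) * (1 + ‖v‖ ^ 2) := by
      rw [h, ← sqrt_mul (by positivity), sq_sqrt (by positivity)]
    rw [one_add_sq_mul_one_add_sq_eq] at hsq
    have hnorm : ‖u - v‖ ^ 2 = 0 := by
      linarith [sq_inner_le_sq_norm_mul_norm u v, sq_nonneg ‖u - v‖]
    rwa [sq_eq_zero_iff, norm_sub_eq_zero_iff] at hnorm
  · rintro rfl
    rw [real_inner_self_eq_norm_sq, ← sqrt_mul (by positivity), sqrt_mul_self (by positivity)]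

end Hyperboloid

/-- Pointwise integrand inequality proving the comparison theorem (Theorem 1):
for `a > b > 0`, vectors `u, v` in a real inner product space, and `x ∈ ℝ`, with
`f(x) = √(a² + x²) − √(b² + x²)
        − x·[arsinh(x/a) − arsinh(x/b) − arsinh(x₀/a) + arsinh(x₀/b)]`,
one has
`√(1 + ‖v‖²)·f(x) − (⟨u,v⟩/√(1 + ‖u‖²))·(√(a² + x₀²) − √(b² + x₀²))
  ≥ (1/√(1 + ‖u‖²))·(√(a² + x₀²) − √(b² + x₀²))`,
with equality iff `x = x₀` and `u = v`. -/
theorem stmt_5 (a b x₀ : ℝ) (hab : a > b) (hb : b > 0)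
    {V : Type*} [NormedAddCommGroup V] [InnerProductSpace ℝ V]
    (u v : V) (x : ℝ)
    (f : ℝ → ℝ)
    (hf : ∀ y, f y =
      Real.sqrt (a ^ 2 + y ^ 2) - Real.sqrt (b ^ 2 + y ^ 2) -
        y * (Real.arsinh (y / a) - Real.arsinh (y / b)
              - Real.arsinh (x₀ / a) + Real.arsinh (x₀ / b))) :
    (1 / Real.sqrt (1 + ‖u‖ ^ 2)) *
        (Real.sqrt (a ^ 2 + x₀ ^ 2) - Real.sqrt (b ^ 2 + x₀ ^ 2)) ≤
      Real.sqrt (1 + ‖v‖ ^ 2) * f x -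
        (⟪u, v⟫ / Real.sqrt (1 + ‖u‖ ^ 2)) *
          (Real.sqrt (a ^ 2 + x₀ ^ 2) - Real.sqrt (b ^ 2 + x₀ ^ 2)) ∧
      (Real.sqrt (1 + ‖v‖ ^ 2) * f x -
          (⟪u, v⟫ / Real.sqrt (1 + ‖u‖ ^ 2)) *
            (Real.sqrt (a ^ 2 + x₀ ^ 2) - Real.sqrt (b ^ 2 + x₀ ^ 2)) =
        (1 / Real.sqrt (1 + ‖u‖ ^ 2)) *
          (Real.sqrt (a ^ 2 + x₀ ^ 2) - Real.sqrt (b ^ 2 + x₀ ^ 2))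
        ↔ x = x₀ ∧ u = v) := by
  set c := √(a ^ 2 + x₀ ^ 2) - √(b ^ 2 + x₀ ^ 2)
  set P := √(1 + ‖u‖ ^ 2)
  set Q := √(1 + ‖v‖ ^ 2)
  have hPQ : 0 < P * Q := by positivity
  have hc : 0 < c := sub_pos.2 <| sqrt_lt_sqrt (by positivity) (by nlinarith)
  have hmin : ∀ y, y ≠ x₀ → c < f y := fun y hy ↦ by
    rw [hf]
    linarith [sqrt_sub_sqrt_lt_of_ne hb hab hy]
  have hfx₀ : f x₀ = c := by rw [hf]; ring
  have hfx : 0 ≤ P * Q * (f x - c) := by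
    rcases eq_or_ne x x₀ with rfl | hx
    · rw [hfx₀, sub_self, mul_zero]
    · exact mul_nonneg hPQ.le (sub_nonneg.2 (hmin x hx).le)
  have hfx_eq : P * Q * (f x - c) = 0 ↔ x = x₀ := by
    rw [mul_eq_zero, or_iff_right hPQ.ne', sub_eq_zero]
    exact ⟨fun h ↦ by_contra fun hx ↦ (hmin x hx).ne' h, fun h ↦ h ▸ hfx₀⟩
  have huv : 0 ≤ c * (P * Q - (1 + ⟪u, v⟫)) :=
    mul_nonneg hc.le (sub_nonneg.2 (one_add_inner_le_sqrt_mul_sqrt u v))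
  have huv_eq : c * (P * Q - (1 + ⟪u, v⟫)) = 0 ↔ u = v := by
    rw [mul_eq_zero, or_iff_right hc.ne', sub_eq_zero, eq_comm,
      one_add_inner_eq_sqrt_mul_sqrt_iff]
  have hP : 0 < P := by positivity
  have hdiff : Q * f x - ⟪u, v⟫ / P * c - 1 / P * c =
      (P * Q * (f x - c) + c * (P * Q - (1 + ⟪u, v⟫))) / P := by
    field_simp
    ring
  constructor
  · rw [← sub_nonneg, hdiff]
    exact div_nonneg (add_nonneg hfx huv) hP.le
  · rw [← sub_eq_zero, hdiff, div_eq_zero_iff, or_iff_left hP.ne',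
      add_eq_zero_iff_of_nonneg hfx huv, hfx_eq, huv_eq]
end
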